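/- arXiv:1707.06166 — 4 statements merged into one kernel-verified Lean document; each statement's English description precedes it below -/
import Mathlib

section
/- Let M be a closed z-invariant subspace of H containing a function not vanishing at 0, and let h be the orthogonal projection of the constant function 1 onto M. Then ||h||² = h(0), and the function G = h/√(h(0)) is H-inner. -/
open Filter Topology
open scoped InnerProductSpace ComplexConjugate

/-- A weighted Hardy space `H²_ω`: a Hilbert space with an orthogonal basis of
monomials `e k` (representing `z^k`) with `‖e k‖² = ω k`, together with the shift
operator `S` (multiplication by `z`). -/
structure WeightedHardySpace where
  E : Type
  [instN : NormedAddCommGroup E]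
  [instI : InnerProductSpace ℂ E]
  [instC : CompleteSpace E]
  ω : ℕ → ℝ
  hωpos : ∀ k, 0 < ω k
  hω0 : ω 0 = 1
  hωlim : Tendsto (fun k => ω k / ω (k + 1)) atTop (𝓝 1)
  e : ℕ → E
  horth : ∀ j k, ⟪e j, e k⟫_ℂ = if j = k then (ω k : ℂ) else 0
  hdense : (Submodule.span ℂ (Set.range e)).topologicalClosure = ⊤
  S : E →L[ℂ] E
  hshift : ∀ k, S (e k) = e (k + 1)

attribute [instance] WeightedHardySpace.instN WeightedHardySpace.instI WeightedHardySpace.instC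

namespace WeightedHardySpace

variable (H : WeightedHardySpace)

/-- The constant function `1`. -/
noncomputable def one : H.E := H.e 0

/-- The `k`-th Taylor coefficient of `f`. -/
noncomputable def coeff (f : H.E) (k : ℕ) : ℂ := ⟪H.e k, f⟫_ℂ / (H.ω k : ℂ)

/-- Evaluation of `f` at a point `w` of the unit disk. -/
noncomputable def eval (f : H.E) (w : ℂ) : ℂ := ∑' k, H.coeff f k * w ^ k

/-- Multiplication of `f` by the polynomial `p`. -/
noncomputable def polyMul (p : Polynomial ℂ) (f : H.E) : H.E :=
  ∑ i ∈ p.support, p.coeff i • ((H.S ^ i) f)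

/-- The closed shift-invariant subspace `[f]` generated by `f`. -/
noncomputable def genSub (f : H.E) : Submodule ℂ H.E :=
  (Submodule.span ℂ (Set.range fun p : Polynomial ℂ => H.polyMul p f)).topologicalClosure

/-- `f` is `H`-inner: unit norm and `⟨z^j f, f⟩ = 0` for all `j ≥ 1`. -/
def IsInner (f : H.E) : Prop :=
  ‖f‖ = 1 ∧ ∀ j : ℕ, 1 ≤ j → ⟪(H.S ^ j) f, f⟫_ℂ = 0

end WeightedHardySpace

/-! The defining property of the projection is `⟪g, 1⟫ = ⟪g, h⟫` for every `g ∈ M`.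
Taking `g = h` gives `‖h‖² = ⟪1, h⟫ = h(0)`. Taking `g = z^j h`, which lies in `M` by invariance,
gives `⟪z^j h, h⟫ = ⟪z^j h, 1⟫ = 0` for `j ≥ 1`, since `1` is orthogonal to every `z^{k+1}` and
hence, by density of the polynomials, to the range of the shift. Finally `h ≠ 0`: otherwise
`1 ⊥ M`, i.e. every function of `M` vanishes at `0`. -/

section InnerProductSpace

variable {𝕜 E : Type*} [RCLike 𝕜] [NormedAddCommGroup E] [InnerProductSpace 𝕜 E]

theorem inner_eq_inner_of_sub_mem_orthogonal {K : Submodule 𝕜 E} {u v w : E} (hw : w ∈ K)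
    (huv : u - v ∈ Kᗮ) : ⟪w, u⟫_𝕜 = ⟪w, v⟫_𝕜 := by
  rw [← sub_eq_zero, ← inner_sub_right]
  exact Submodule.inner_right_of_mem_orthogonal hw huv

theorem pow_apply_mem_of_forall_apply_mem {K : Submodule 𝕜 E} {T : E →L[𝕜] E}
    (hK : ∀ x ∈ K, T x ∈ K) {x : E} (hx : x ∈ K) (n : ℕ) : (T ^ n) x ∈ K := by
  induction n with
  | zero => simpa using hx
  | succ n ih => rw [pow_succ', mul_apply_eq_comp]; exact hK _ ih

end InnerProductSpace

namespace WeightedHardySpace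

variable (H : WeightedHardySpace)

theorem eval_zero (f : H.E) : H.eval f 0 = ⟪H.one, f⟫_ℂ := by
  rw [eval, tsum_eq_single 0 fun k hk => by simp [zero_pow hk]]
  simp [coeff, one, H.hω0]

theorem inner_one_shift (f : H.E) : ⟪H.one, H.S f⟫_ℂ = 0 := by
  let φ : H.E →L[ℂ] ℂ := (innerSL ℂ H.one).comp H.S
  have hspan : Submodule.span ℂ (Set.range H.e) ≤ φ.ker := by
    rw [Submodule.span_le]
    rintro _ ⟨k, rfl⟩
    simp [φ, one, H.hshift, H.horth]
  have hker := Submodule.topologicalClosure_minimal _ hspan φ.isClosed_ker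
  rw [H.hdense] at hker
  exact hker Submodule.mem_top

theorem inner_pow_shift_one {j : ℕ} (hj : 1 ≤ j) (f : H.E) : ⟪(H.S ^ j) f, H.one⟫_ℂ = 0 := by
  obtain ⟨m, rfl⟩ := Nat.exists_eq_add_of_le' hj
  rw [pow_succ', mul_apply_eq_comp, ← inner_conj_symm, inner_one_shift, map_zero]

theorem isInner_inv_norm_smul {f : H.E} (hf : f ≠ 0)
    (horth : ∀ j : ℕ, 1 ≤ j → ⟪(H.S ^ j) f, f⟫_ℂ = 0) :
    H.IsInner (((‖f‖ : ℂ))⁻¹ • f) := by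
  refine ⟨?_, fun j hj => ?_⟩
  · rw [norm_smul, norm_inv, Complex.norm_real, norm_norm,
      inv_mul_cancel₀ (norm_ne_zero_iff.mpr hf)]
  · rw [map_smul, inner_smul_left, inner_smul_right, horth j hj, mul_zero, mul_zero]

variable {H} {M : Submodule ℂ H.E} {h : H.E}

theorem eval_zero_eq_norm_sq_of_one_sub_mem_orthogonal (hhM : h ∈ M)
    (hhperp : H.one - h ∈ Mᗮ) : H.eval h 0 = (‖h‖ : ℂ) ^ 2 := by
  rw [eval_zero, ← inner_conj_symm, inner_eq_inner_of_sub_mem_orthogonal hhM hhperp,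
    inner_self_eq_norm_sq_to_K, map_pow, RCLike.conj_ofReal]
  rfl

theorem inner_pow_shift_self_of_one_sub_mem_orthogonal (hMinv : ∀ f ∈ M, H.S f ∈ M)
    (hhM : h ∈ M) (hhperp : H.one - h ∈ Mᗮ) {j : ℕ} (hj : 1 ≤ j) :
    ⟪(H.S ^ j) h, h⟫_ℂ = 0 := by
  rw [← inner_eq_inner_of_sub_mem_orthogonal (pow_apply_mem_of_forall_apply_mem hMinv hhM j)
    hhperp, inner_pow_shift_one H hj]

theorem ne_zero_of_one_sub_mem_orthogonal (hex : ∃ f ∈ M, H.eval f 0 ≠ 0)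
    (hhperp : H.one - h ∈ Mᗮ) : h ≠ 0 := by
  rintro rfl
  obtain ⟨f, hfM, hf0⟩ := hex
  rw [sub_zero] at hhperp
  exact hf0 (by rw [eval_zero]; exact Submodule.inner_left_of_mem_orthogonal hfM hhperp)

end WeightedHardySpace

open WeightedHardySpace

theorem projection_norm_sq_and_inner_general (H : WeightedHardySpace) (M : Submodule ℂ H.E)
    (hMinv : ∀ f ∈ M, H.S f ∈ M)
    (hex : ∃ f ∈ M, H.eval f 0 ≠ 0)
    (h : H.E) (hhM : h ∈ M) (hhperp : H.one - h ∈ Mᗮ) :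
    ((‖h‖ : ℂ)) ^ 2 = H.eval h 0 ∧
      H.IsInner ((((Real.sqrt ((H.eval h 0).re) : ℝ) : ℂ))⁻¹ • h) := by
  have hnorm := eval_zero_eq_norm_sq_of_one_sub_mem_orthogonal hhM hhperp
  have hsqrt : Real.sqrt (H.eval h 0).re = ‖h‖ := by
    rw [hnorm, ← Complex.ofReal_pow, Complex.ofReal_re, Real.sqrt_sq (norm_nonneg h)]
  refine ⟨hnorm.symm, ?_⟩
  rw [hsqrt]
  exact H.isInner_inv_norm_smul (ne_zero_of_one_sub_mem_orthogonal hex hhperp)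
    fun j hj => inner_pow_shift_self_of_one_sub_mem_orthogonal hMinv hhM hhperp hj

/-- If `M` is a closed `z`-invariant subspace containing a function not vanishing at `0`,
and `h` is the orthogonal projection of `1` onto `M`, then `‖h‖² = h(0)` and
`G = h / √(h(0))` is `H`-inner. -/
theorem projection_norm_sq_and_inner (H : WeightedHardySpace) (M : Submodule ℂ H.E)
    (hMclosed : IsClosed (M : Set H.E)) (hMinv : ∀ f ∈ M, H.S f ∈ M)
    (hex : ∃ f ∈ M, H.eval f 0 ≠ 0)
    (h : H.E) (hhM : h ∈ M) (hhperp : H.one - h ∈ Mᗮ) :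
    ((‖h‖ : ℂ)) ^ 2 = H.eval h 0 ∧
      H.IsInner ((((Real.sqrt ((H.eval h 0).re) : ℝ) : ℂ))⁻¹ • h) :=
  projection_norm_sq_and_inner_general H M hMinv hex h hhM hhperp
end

section
/- Let M be a closed z-invariant subspace of H containing a function not vanishing at 0, and let h be the orthogonal projection of 1 onto M. Then G = h/√(h(0)) is the unique solution of the extremal problem sup{ Re(g(0)) : g ∈ M, ||g|| ≤ 1 }, and the supremum equals √(h(0)). -/
open Filter Topology
open scoped InnerProductSpace ComplexConjugate

/-!
Since `1 - h ⊥ M`, evaluation at `0` on `M` is the functional `g ↦ ⟪h, g⟫`; in particular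
`h(0) = ‖h‖²`. By Cauchy–Schwarz, `Re ⟪h, g⟫ ≤ ‖h‖` on the unit ball, with equality only at
`g = h / ‖h‖`, and `h ≠ 0` because some element of `M` does not vanish at `0`.
-/

section Extremal

open RCLike

variable {𝕜 E : Type*} [RCLike 𝕜] [NormedAddCommGroup E] [InnerProductSpace 𝕜 E]

theorem inner_eq_inner_of_sub_mem_orthogonal_s3 {K : Submodule 𝕜 E} {u h g : E}
    (hperp : u - h ∈ Kᗮ) (hg : g ∈ K) : ⟪u, g⟫_𝕜 = ⟪h, g⟫_𝕜 := by
  rw [← sub_eq_zero, ← inner_sub_left]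
  exact K.inner_left_of_mem_orthogonal hg hperp

theorem re_inner_le_norm_of_norm_le_one (h : E) {g : E} (hg : ‖g‖ ≤ 1) :
    re ⟪h, g⟫_𝕜 ≤ ‖h‖ :=
  (re_inner_le_norm h g).trans (mul_le_of_le_one_right (norm_nonneg h) hg)

theorem re_inner_smul_inv_norm {h : E} (h0 : h ≠ 0) :
    re ⟪h, (‖h‖⁻¹ : 𝕜) • h⟫_𝕜 = ‖h‖ := by
  have hpos : 0 < ‖h‖ := norm_pos_iff.mpr h0
  rw [inner_smul_right, inner_self_eq_norm_sq_to_K, ← ofReal_inv, ← ofReal_pow, ← ofReal_mul,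
    ofReal_re]
  field_simp

theorem eq_smul_inv_norm_of_re_inner_eq_norm {h g : E} (h0 : h ≠ 0) (hg : ‖g‖ ≤ 1)
    (heq : re ⟪h, g⟫_𝕜 = ‖h‖) : g = (‖h‖⁻¹ : 𝕜) • h := by
  have hpos : 0 < ‖h‖ := norm_pos_iff.mpr h0
  apply eq_of_norm_le_re_inner_eq_norm_sq (𝕜 := 𝕜)
  · rwa [norm_smul_inv_norm h0]
  · rw [norm_smul_inv_norm h0, one_pow, ← inner_conj_symm, conj_re, inner_smul_left,
      RCLike.conj_inv, conj_ofReal, ← ofReal_inv, re_ofReal_mul, heq, inv_mul_cancel₀ hpos.ne']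

end Extremal

theorem WeightedHardySpace.eval_zero_eq_inner_one (H : WeightedHardySpace) (f : H.E) :
    H.eval f 0 = ⟪H.one, f⟫_ℂ := by
  rw [WeightedHardySpace.eval, tsum_eq_single 0 fun k hk => by simp [zero_pow hk]]
  simp [WeightedHardySpace.coeff, WeightedHardySpace.one, H.hω0]

theorem extremal_problem_solution_general (H : WeightedHardySpace) (M : Submodule ℂ H.E)
    (hex : ∃ f ∈ M, H.eval f 0 ≠ 0)
    (h : H.E) (hhM : h ∈ M) (hhperp : H.one - h ∈ Mᗮ) :
    let G : H.E := (((Real.sqrt ((H.eval h 0).re) : ℝ) : ℂ))⁻¹ • h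
    G ∈ M ∧ ‖G‖ ≤ 1 ∧
      (H.eval G 0).re = Real.sqrt ((H.eval h 0).re) ∧
      (∀ g ∈ M, ‖g‖ ≤ 1 → (H.eval g 0).re ≤ Real.sqrt ((H.eval h 0).re)) ∧
      (∀ g ∈ M, ‖g‖ ≤ 1 → (H.eval g 0).re = Real.sqrt ((H.eval h 0).re) → g = G) := by
  have hrep : ∀ g ∈ M, H.eval g 0 = ⟪h, g⟫_ℂ := fun g hg =>
    (H.eval_zero_eq_inner_one g).trans (inner_eq_inner_of_sub_mem_orthogonal_s3 hhperp hg)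
  have h0 : h ≠ 0 := by
    rintro rfl
    obtain ⟨f, hfM, hf⟩ := hex
    exact hf (by rw [hrep f hfM, inner_zero_left])
  have hsqrt : Real.sqrt (H.eval h 0).re = ‖h‖ := by
    rw [hrep h hhM, ← RCLike.re_to_complex, inner_self_eq_norm_sq, Real.sqrt_sq (norm_nonneg h)]
  have hGM : (‖h‖ : ℂ)⁻¹ • h ∈ M := M.smul_mem _ hhM
  simp only [hsqrt, hrep _ hGM]
  refine ⟨hGM, (norm_smul_inv_norm h0).le, re_inner_smul_inv_norm (𝕜 := ℂ) h0, fun g hg hg1 => ?_,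
    fun g hg hg1 heq => ?_⟩
  · rw [hrep g hg]; exact re_inner_le_norm_of_norm_le_one (𝕜 := ℂ) h hg1
  · exact eq_smul_inv_norm_of_re_inner_eq_norm h0 hg1 (by rwa [hrep g hg] at heq)

/-- `G = h/√(h(0))` is the unique solution of the extremal problem
`sup { Re g(0) : g ∈ M, ‖g‖ ≤ 1 }`, and the supremum equals `√(h(0))`. -/
theorem extremal_problem_solution (H : WeightedHardySpace) (M : Submodule ℂ H.E)
    (hMclosed : IsClosed (M : Set H.E)) (hMinv : ∀ f ∈ M, H.S f ∈ M)
    (hex : ∃ f ∈ M, H.eval f 0 ≠ 0)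
    (h : H.E) (hhM : h ∈ M) (hhperp : H.one - h ∈ Mᗮ) :
    let G : H.E := (((Real.sqrt ((H.eval h 0).re) : ℝ) : ℂ))⁻¹ • h
    G ∈ M ∧ ‖G‖ ≤ 1 ∧
      (H.eval G 0).re = Real.sqrt ((H.eval h 0).re) ∧
      (∀ g ∈ M, ‖g‖ ≤ 1 → (H.eval g 0).re ≤ Real.sqrt ((H.eval h 0).re)) ∧
      (∀ g ∈ M, ‖g‖ ≤ 1 → (H.eval g 0).re = Real.sqrt ((H.eval h 0).re) → g = G) :=
  extremal_problem_solution_general H M hex h hhM hhperp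
end

section
/- With f_Z the Shapiro-Shields determinant function for a finite set Z of distinct points in the disk, one has ||f_Z||² = conj(det K_Z) · f_Z(0). -/
open Filter Topology
open scoped InnerProductSpace ComplexConjugate

/-! Since `⟪k_{z_i}, 1⟫ = 1` and `⟪k_{z_i}, k_{z_s}⟫ = (K_Z)_{s,i}`, the inner product `⟪k_{z_i}, f_Z⟫`
equals `det K_Z - ∑_s det (K_Z with row s replaced by 1) · (K_Z)_{s,i}`, which vanishes by Cramer's rule
for `K_Zᵀ`. So `f_Z` is orthogonal to every `k_{z_i}`, and
`‖f_Z‖² = ⟪det K_Z • 1, f_Z⟫ = conj (det K_Z) · f_Z(0)`. -/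

theorem Matrix.sum_det_updateRow_mul {n α : Type*} [Fintype n] [DecidableEq n] [CommRing α]
    (A : Matrix n n α) (b : n → α) (i : n) :
    ∑ s, (A.updateRow s b).det * A s i = A.det * b i := by
  have h := congrFun (A.transpose.mulVec_cramer b) i
  simp only [Matrix.mulVec, dotProduct, Matrix.transpose_apply, Matrix.cramer_transpose_apply,
    Matrix.det_transpose, Pi.smul_apply, smul_eq_mul] at h
  simpa only [mul_comm] using h

section GramDeterminant

variable {E ι : Type*} [NormedAddCommGroup E] [InnerProductSpace ℂ E] [Fintype ι] [DecidableEq ι]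
  {K : Matrix ι ι ℂ} {u : E} {k : ι → E} {b : ι → ℂ}

theorem inner_det_smul_sub_sum_det_updateRow_smul_eq_zero
    (hu : ∀ i, ⟪k i, u⟫_ℂ = b i) (hK : ∀ i s, ⟪k i, k s⟫_ℂ = K s i) (i : ι) :
    ⟪k i, K.det • u - ∑ s, (K.updateRow s b).det • k s⟫_ℂ = 0 := by
  simp only [inner_sub_right, inner_smul_right, inner_sum, hu, hK, K.sum_det_updateRow_mul]
  ring

theorem norm_sq_det_smul_sub_sum_det_updateRow_smul
    (hu : ∀ i, ⟪k i, u⟫_ℂ = b i) (hK : ∀ i s, ⟪k i, k s⟫_ℂ = K s i) :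
    let f := K.det • u - ∑ s, (K.updateRow s b).det • k s
    (‖f‖ : ℂ) ^ 2 = conj K.det * ⟪u, f⟫_ℂ := by
  intro f
  have hf : ∀ i, ⟪k i, f⟫_ℂ = 0 := inner_det_smul_sub_sum_det_updateRow_smul_eq_zero hu hK
  calc (‖f‖ : ℂ) ^ 2 = ⟪K.det • u - ∑ s, (K.updateRow s b).det • k s, f⟫_ℂ :=
        (inner_self_eq_norm_sq_to_K f).symm
    _ = conj K.det * ⟪u, f⟫_ℂ - ∑ s, conj (K.updateRow s b).det * ⟪k s, f⟫_ℂ := by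
      simp only [inner_sub_left, inner_smul_left, sum_inner]
    _ = conj K.det * ⟪u, f⟫_ℂ := by simp [hf]

end GramDeterminant

namespace WeightedHardySpace

variable (H : WeightedHardySpace)

theorem coeff_one (m : ℕ) : H.coeff H.one m = if m = 0 then 1 else 0 := by
  simp only [coeff, one, H.horth]
  split_ifs with hm
  · simp [hm, H.hω0]
  · simp

theorem eval_one (w : ℂ) : H.eval H.one w = 1 := by
  rw [eval, tsum_eq_single 0 fun m hm => by simp [H.coeff_one, hm]]
  simp [H.coeff_one]

end WeightedHardySpace

theorem shapiroShields_norm_sq_general (H : WeightedHardySpace) (n : ℕ) (z : Fin n → ℂ)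
    (k : Fin n → H.E) (hk : ∀ i, ∀ g : H.E, ⟪k i, g⟫_ℂ = H.eval g (z i)) :
    let K : Matrix (Fin n) (Fin n) ℂ := Matrix.of fun s t => H.eval (k s) (z t)
    let fZ : H.E := K.det • H.one -
      ∑ s : Fin n, (K.updateRow s (fun _ => (1 : ℂ))).det • k s
    ((‖fZ‖ : ℂ)) ^ 2 = (starRingEnd ℂ) K.det * H.eval fZ 0 := by
  intro K fZ
  rw [H.eval_zero]
  exact norm_sq_det_smul_sub_sum_det_updateRow_smul (fun i => by rw [hk, H.eval_one])
    fun i s => hk i (k s)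

/-- Lemma 3.3: `‖f_Z‖² = conj(det K_Z) ⬝ f_Z(0)` for the Shapiro-Shields function `f_Z`,
written out through its cofactor expansion along the first column. -/
theorem shapiroShields_norm_sq (H : WeightedHardySpace) (n : ℕ) (z : Fin n → ℂ)
    (hz : ∀ i, ‖z i‖ < 1) (hinj : Function.Injective z)
    (k : Fin n → H.E) (hk : ∀ i, ∀ g : H.E, ⟪k i, g⟫_ℂ = H.eval g (z i)) :
    let K : Matrix (Fin n) (Fin n) ℂ := Matrix.of fun s t => H.eval (k s) (z t)
    let fZ : H.E := K.det • H.one -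
      ∑ s : Fin n, (K.updateRow s (fun _ => (1 : ℂ))).det • k s
    ((‖fZ‖ : ℂ)) ^ 2 = (starRingEnd ℂ) K.det * H.eval fZ 0 :=
  shapiroShields_norm_sq_general H n z k hk
end

section
/- In the Bergman space A², for z_1 ∈ D \ {0}, the function g(z) = (1/√(2 − |z_1|²))·(conj(z_1)/|z_1|)·((z_1 − z)/(1 − conj(z_1) z))·((2 − conj(z_1) z − |z_1|²)/(1 − conj(z_1) z)) is A²-inner, and dist²_{A²}(1, [g]) = (1 − |z_1|²)². -/
/-!
Write `s = |z₁|²`. By the identity theorem for power series, `g = c · Σ aₖ zᵏ` with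
`|c|² = 1/(2 - s)`, `a₀ = z₁(2 - s)` and `aₙ₊₁ = -(1 - s)²(n + 2) z̄₁ⁿ`. The Bergman weight
`1/(n + 2)` of `zⁿ⁺¹` cancels the factor `n + 2`, so `⟨zʲg, g⟩ = |c|² Σₖ āₖ aₖ₊ⱼ/(k + j + 1)`
reduces to the series `Σ (n + 2) sⁿ = (2 - s)/(1 - s)²`: it is `1` for `j = 0`, and for `j ≥ 1`
the tail cancels the `k = 0` term. For inner `g`, the vector `1 - conj(g(0)) g` is orthogonal to
every `zʲg`, hence to `[g]`, so `dist²(1, [g]) = 1 - |g(0)|² = 1 - s(2 - s) = (1 - s)²`.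
-/

open Filter Topology
open scoped InnerProductSpace ComplexConjugate

theorem eq_zero_of_hasSum_mul_pow_zero {𝕜 : Type*} [NontriviallyNormedField 𝕜] [CompleteSpace 𝕜]
    {d : ℕ → 𝕜} {r : ℝ} (hr : 0 < r)
    (hd : ∀ w : 𝕜, ‖w‖ < r → HasSum (fun k => d k * w ^ k) 0) : d = 0 := by
  set p := FormalMultilinearSeries.ofScalars 𝕜 d
  obtain ⟨w, hw0, hwr⟩ := NormedField.exists_norm_lt 𝕜 hr
  have hradius : (‖w‖₊ : ENNReal) ≤ p.radius :=
    p.le_radius_of_tendsto (l := 0) (by simpa [p] using (hd w hwr).summable.tendsto_atTop_zero.norm)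
  have hp := p.hasFPowerSeriesOnBall (lt_of_lt_of_le (by simpa using hw0) hradius)
  have hsum : p.sum =ᶠ[𝓝 0] 0 := by
    filter_upwards [Metric.ball_mem_nhds (0 : 𝕜) hr] with v hv
    simpa [p, FormalMultilinearSeries.sum, FormalMultilinearSeries.ofScalars_apply_eq, mul_comm]
      using (hd v (mem_ball_zero_iff.mp hv)).tsum_eq
  exact (FormalMultilinearSeries.ofScalars_series_eq_zero 𝕜).mp
    (hp.hasFPowerSeriesAt.eq_zero_of_eventually hsum)

theorem eq_of_hasSum_mul_pow {𝕜 : Type*} [NontriviallyNormedField 𝕜] [CompleteSpace 𝕜]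
    {a b : ℕ → 𝕜} {F : 𝕜 → 𝕜} {r : ℝ} (hr : 0 < r)
    (ha : ∀ w : 𝕜, ‖w‖ < r → HasSum (fun k => a k * w ^ k) (F w))
    (hb : ∀ w : 𝕜, ‖w‖ < r → HasSum (fun k => b k * w ^ k) (F w)) : a = b :=
  sub_eq_zero.mp <| eq_zero_of_hasSum_mul_pow_zero hr fun w hw => by
    simpa [sub_mul] using (ha w hw).sub (hb w hw)

theorem one_sub_ne_zero_of_norm_lt_one {R : Type*} [NormedRing R] [NormOneClass R] {x : R}
    (hx : ‖x‖ < 1) : 1 - x ≠ 0 := by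
  rintro h
  simp [← sub_eq_zero.mp h] at hx

theorem hasSum_add_two_mul_pow {𝕜 : Type*} [NormedField 𝕜] [CompleteSpace 𝕜] {x : 𝕜}
    (hx : ‖x‖ < 1) : HasSum (fun k : ℕ => ((k : 𝕜) + 2) * x ^ k) ((2 - x) / (1 - x) ^ 2) := by
  have hx1 := one_sub_ne_zero_of_norm_lt_one hx
  have hsum := (hasSum_coe_mul_geometric_of_norm_lt_one hx).add
    ((hasSum_geometric_of_norm_lt_one hx).mul_left 2)
  rw [show x / (1 - x) ^ 2 + 2 * (1 - x)⁻¹ = (2 - x) / (1 - x) ^ 2 by field_simp; ring] at hsum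
  exact hsum.congr_fun fun k => by ring

noncomputable def singlePointCoeff (z : ℂ) : ℕ → ℂ
  | 0 => z * (2 - conj z * z)
  | n + 1 => -(1 - conj z * z) ^ 2 * ((n : ℂ) + 2) * conj z ^ n

theorem hasSum_singlePointCoeff_mul_pow (z w : ℂ) (hw : ‖conj z * w‖ < 1) :
    HasSum (fun k => singlePointCoeff z k * w ^ k)
      ((z - w) * (2 - conj z * w - conj z * z) / (1 - conj z * w) ^ 2) := by
  have hw1 := one_sub_ne_zero_of_norm_lt_one hw
  refine (hasSum_nat_add_iff' 1).mp ?_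
  rw [Finset.sum_range_one, show (z - w) * (2 - conj z * w - conj z * z) / (1 - conj z * w) ^ 2 -
      singlePointCoeff z 0 * w ^ 0 =
      -(1 - conj z * z) ^ 2 * w * ((2 - conj z * w) / (1 - conj z * w) ^ 2) by
    rw [singlePointCoeff, pow_zero, mul_one, div_sub' (pow_ne_zero 2 hw1), mul_div_assoc']
    ring]
  exact ((hasSum_add_two_mul_pow hw).mul_left _).congr_fun fun k => by
    simp only [singlePointCoeff]; ring

theorem singlePointCoeff_succ_div (z : ℂ) (m : ℕ) :
    singlePointCoeff z (m + 1) / ((m + 1 : ℕ) + 1) = -(1 - conj z * z) ^ 2 * conj z ^ m := by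
  have hm : (m : ℂ) + 2 ≠ 0 := by norm_cast
  rw [singlePointCoeff, Nat.cast_succ, add_assoc, one_add_one_eq_two]
  field_simp

theorem hasSum_conj_singlePointCoeff_mul {z : ℂ} (hz : ‖z‖ < 1) (j : ℕ) :
    HasSum (fun k => conj (singlePointCoeff z k) * singlePointCoeff z (k + j) / ((k + j : ℕ) + 1))
      (if j = 0 then 2 - conj z * z else 0) := by
  have hs : ‖conj z * z‖ < 1 := by
    simpa using mul_lt_one_of_nonneg_of_lt_one_left (norm_nonneg z) hz hz.le
  have hs1 := one_sub_ne_zero_of_norm_lt_one hs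
  refine (hasSum_nat_add_iff' 1).mp ?_
  rw [Finset.sum_range_one, show ((if j = 0 then 2 - conj z * z else 0) -
      conj (singlePointCoeff z 0) * singlePointCoeff z (0 + j) / ((0 + j : ℕ) + 1)) =
      (1 - conj z * z) ^ 4 * conj z ^ j * ((2 - conj z * z) / (1 - conj z * z) ^ 2) by
    rcases j with _ | i
    · simp only [singlePointCoeff, if_true, map_mul, map_sub, map_ofNat, Complex.conj_conj]
      field_simp
      ring
    · rw [if_neg i.succ_ne_zero, mul_div_assoc, zero_add, singlePointCoeff_succ_div]
      simp only [singlePointCoeff, map_mul, map_sub, map_ofNat, Complex.conj_conj]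
      field_simp
      ring]
  refine ((hasSum_add_two_mul_pow hs).mul_left _).congr_fun fun n => ?_
  rw [mul_div_assoc, add_right_comm n 1 j, singlePointCoeff_succ_div]
  simp only [singlePointCoeff, map_mul, map_neg, map_pow, map_sub, map_one, Complex.conj_conj,
    map_add, map_natCast, map_ofNat]
  ring

theorem Submodule.infDist_eq_norm_sub_of_inner_eq_zero {𝕜 E : Type*} [RCLike 𝕜]
    [NormedAddCommGroup E] [InnerProductSpace 𝕜 E] (K : Submodule 𝕜 E) {u v : E} (hv : v ∈ K)
    (h : ∀ w ∈ K, ⟪u - v, w⟫_𝕜 = 0) : Metric.infDist u K = ‖u - v‖ := by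
  rw [Metric.infDist_eq_iInf, (K.norm_eq_iInf_iff_inner_eq_zero hv).mpr h]
  simp only [dist_eq_norm]
  rfl

namespace WeightedHardySpace

variable (H : WeightedHardySpace)

theorem inner_e_eq_coeff_mul (f : H.E) (k : ℕ) : ⟪H.e k, f⟫_ℂ = H.coeff f k * H.ω k := by
  rw [coeff, div_mul_cancel₀]
  exact_mod_cast (H.hωpos k).ne'

theorem norm_e (k : ℕ) : ‖H.e k‖ = √(H.ω k) := by
  have h := H.horth k k
  rw [if_pos rfl, inner_self_eq_norm_sq_to_K] at h
  rw [← Real.sqrt_sq (norm_nonneg _)]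
  exact congrArg Real.sqrt (Complex.ofReal_injective (by push_cast; exact h))

noncomputable def unitE (k : ℕ) : H.E := (((√(H.ω k))⁻¹ : ℝ) : ℂ) • H.e k

theorem ofReal_inv_sqrt_ω_mul_self (k : ℕ) :
    (((√(H.ω k))⁻¹ : ℝ) : ℂ) * (((√(H.ω k))⁻¹ : ℝ) : ℂ) = (H.ω k : ℂ)⁻¹ := by
  rw [← Complex.ofReal_mul, ← mul_inv, Real.mul_self_sqrt (H.hωpos k).le, Complex.ofReal_inv]

theorem orthonormal_unitE : Orthonormal ℂ H.unitE := by
  rw [orthonormal_iff_ite]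
  intro i j
  simp only [unitE, inner_smul_left, inner_smul_right, Complex.conj_ofReal, H.horth]
  split_ifs with h
  · subst h
    have hω : (H.ω i : ℂ) ≠ 0 := by exact_mod_cast (H.hωpos i).ne'
    rw [← mul_assoc, ofReal_inv_sqrt_ω_mul_self, inv_mul_cancel₀ hω]
  · simp

theorem dense_span_unitE : ⊤ ≤ (Submodule.span ℂ (Set.range H.unitE)).topologicalClosure := by
  rw [← H.hdense]
  refine Submodule.topologicalClosure_mono (Submodule.span_le.mpr ?_)
  rintro _ ⟨k, rfl⟩
  have he : H.e k = ((√(H.ω k) : ℝ) : ℂ) • H.unitE k := by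
    rw [unitE, smul_smul, ← Complex.ofReal_mul, mul_inv_cancel₀ (Real.sqrt_pos.mpr (H.hωpos k)).ne',
      Complex.ofReal_one, one_smul]
  rw [he]
  exact Submodule.smul_mem _ _ (Submodule.subset_span ⟨k, rfl⟩)

noncomputable def hilbertBasis : HilbertBasis ℕ ℂ H.E :=
  HilbertBasis.mk H.orthonormal_unitE H.dense_span_unitE

theorem hasSum_coeff_smul (f : H.E) : HasSum (fun k => H.coeff f k • H.e k) f :=
  (H.hilbertBasis.hasSum_repr f).congr_fun fun k => by
    rw [HilbertBasis.repr_apply_apply, hilbertBasis, HilbertBasis.coe_mk, unitE, inner_smul_left,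
      smul_smul, coeff, Complex.conj_ofReal, mul_right_comm, ofReal_inv_sqrt_ω_mul_self, div_eq_inv_mul]

theorem norm_coeff_le (f : H.E) (k : ℕ) : ‖H.coeff f k‖ ≤ ‖f‖ / √(H.ω k) := by
  rw [coeff, norm_div, Complex.norm_real, Real.norm_of_nonneg (H.hωpos k).le]
  calc ‖⟪H.e k, f⟫_ℂ‖ / H.ω k ≤ ‖H.e k‖ * ‖f‖ / H.ω k :=
        div_le_div_of_nonneg_right (norm_inner_le_norm _ _) (H.hωpos k).le
    _ = ‖f‖ / √(H.ω k) := by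
        rw [norm_e, div_eq_div_iff (H.hωpos k).ne' (Real.sqrt_pos.mpr (H.hωpos k)).ne']
        linear_combination ‖f‖ * Real.mul_self_sqrt (H.hωpos k).le

theorem summable_coeff_mul_pow (f : H.E) {w : ℂ} (hw : ‖w‖ < 1) :
    Summable fun k => H.coeff f k * w ^ k := by
  have hratio : Tendsto (fun k => ‖w‖ * √(H.ω k / H.ω (k + 1))) atTop (𝓝 ‖w‖) := by
    simpa using H.hωlim.sqrt.const_mul ‖w‖
  obtain ⟨r, hwr, hr1⟩ := exists_between hw
  have hmajorant : Summable fun k => ‖w‖ ^ k / √(H.ω k) := by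
    refine summable_of_ratio_norm_eventually_le hr1 ?_
    filter_upwards [hratio.eventually (gt_mem_nhds hwr)] with k hk
    have hk0 := Real.sqrt_pos.mpr (H.hωpos k)
    have hk1 := Real.sqrt_pos.mpr (H.hωpos (k + 1))
    rw [Real.norm_of_nonneg (by positivity), Real.norm_of_nonneg (by positivity)]
    calc ‖w‖ ^ (k + 1) / √(H.ω (k + 1))
        = ‖w‖ * √(H.ω k / H.ω (k + 1)) * (‖w‖ ^ k / √(H.ω k)) := by
          rw [Real.sqrt_div' _ (H.hωpos (k + 1)).le]; field_simp; ring
      _ ≤ r * (‖w‖ ^ k / √(H.ω k)) := by gcongr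
  refine Summable.of_norm_bounded (hmajorant.mul_left ‖f‖) fun k => ?_
  rw [norm_mul, norm_pow, ← mul_div_assoc, mul_div_right_comm]
  gcongr
  exact H.norm_coeff_le f k

theorem hasSum_eval (f : H.E) {w : ℂ} (hw : ‖w‖ < 1) :
    HasSum (fun k => H.coeff f k * w ^ k) (H.eval f w) :=
  (H.summable_coeff_mul_pow f hw).hasSum

theorem coeff_eq_of_hasSum_eval {f : H.E} {a : ℕ → ℂ} {r : ℝ} (hr : 0 < r)
    (ha : ∀ w : ℂ, ‖w‖ < r → HasSum (fun k => a k * w ^ k) (H.eval f w)) : H.coeff f = a :=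
  eq_of_hasSum_mul_pow (lt_min hr one_pos)
    (fun _ hw => H.hasSum_eval f (hw.trans_le (min_le_right _ _)))
    (fun w hw => ha w (hw.trans_le (min_le_left _ _)))

theorem pow_S_e (j k : ℕ) : (H.S ^ j) (H.e k) = H.e (k + j) := by
  induction j with
  | zero => rfl
  | succ j ih => rw [pow_succ', mul_apply_eq_comp, ih, H.hshift, add_assoc]

theorem hasSum_pow_S (f : H.E) (j : ℕ) :
    HasSum (fun k => H.coeff f k • H.e (k + j)) ((H.S ^ j) f) := by
  simpa only [map_smul, pow_S_e] using (H.hasSum_coeff_smul f).mapL (H.S ^ j)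

theorem hasSum_inner_pow_S (f g : H.E) (j : ℕ) :
    HasSum (fun k => conj (H.coeff f k) * H.coeff g (k + j) * H.ω (k + j))
      ⟪(H.S ^ j) f, g⟫_ℂ := by
  rw [← Complex.hasSum_conj', inner_conj_symm]
  refine ((H.hasSum_pow_S f j).mapL (innerSL ℂ g)).congr_fun fun k => ?_
  rw [innerSL_apply_apply, ← inner_conj_symm, inner_smul_left, inner_e_eq_coeff_mul, mul_assoc]

theorem inner_one_pow_S (f : H.E) {j : ℕ} (hj : 0 < j) : ⟪H.one, (H.S ^ j) f⟫_ℂ = 0 := by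
  refine ((H.hasSum_pow_S f j).mapL (innerSL ℂ H.one)).unique (hasSum_zero.congr_fun fun k => ?_)
  rw [innerSL_apply_apply, one, inner_smul_right, H.horth, if_neg (by omega), mul_zero]

theorem mem_genSub_self (f : H.E) : f ∈ H.genSub f := by
  refine Submodule.le_topologicalClosure _ (Submodule.subset_span ⟨1, ?_⟩)
  show H.polyMul 1 f = f
  rw [polyMul, ← Polynomial.C_1, Polynomial.support_C one_ne_zero]
  simp

theorem inner_eq_zero_of_mem_genSub {v f x : H.E} (hv : ∀ i, ⟪v, (H.S ^ i) f⟫_ℂ = 0)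
    (hx : x ∈ H.genSub f) : ⟪v, x⟫_ℂ = 0 := by
  suffices H.genSub f ≤ (innerSL ℂ v).ker from this hx
  refine Submodule.topologicalClosure_minimal _ (Submodule.span_le.mpr ?_)
    (ContinuousLinearMap.isClosed_ker _)
  rintro _ ⟨p, rfl⟩
  rw [SetLike.mem_coe, LinearMap.mem_ker, ContinuousLinearMap.coe_coe, innerSL_apply_apply]
  simp only [polyMul, inner_sum, inner_smul_right, hv, mul_zero, Finset.sum_const_zero]

theorem isInner_of_inner_pow_S_self {g : H.E}
    (h : ∀ j, ⟪(H.S ^ j) g, g⟫_ℂ = if j = 0 then 1 else 0) : H.IsInner g := by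
  refine ⟨?_, fun j hj => by simpa [Nat.one_le_iff_ne_zero.mp hj] using h j⟩
  have h0 : ((‖g‖ ^ 2 : ℝ) : ℂ) = 1 := by simpa [inner_self_eq_norm_sq_to_K] using h 0
  exact (pow_eq_one_iff_of_nonneg (norm_nonneg g) two_ne_zero).mp (by exact_mod_cast h0)

theorem infDist_one_genSub_sq_of_isInner {g : H.E} (hg : H.IsInner g) :
    Metric.infDist H.one (H.genSub g) ^ 2 = 1 - ‖H.eval g 0‖ ^ 2 := by
  obtain ⟨hnorm, horth⟩ := hg
  set a := ⟪H.one, g⟫_ℂ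
  have hperp : ∀ i, ⟪H.one - conj a • g, (H.S ^ i) g⟫_ℂ = 0 := by
    rintro (_ | i)
    · simp [a, hnorm]
    · rw [inner_sub_left, inner_smul_left, H.inner_one_pow_S g i.succ_pos, ← inner_conj_symm,
        horth _ i.succ_pos]
      simp
  have hone : ‖H.one‖ = 1 := by rw [one, norm_e, H.hω0, Real.sqrt_one]
  rw [Submodule.infDist_eq_norm_sub_of_inner_eq_zero _ (Submodule.smul_mem _ _ (H.mem_genSub_self g))
    fun w hw => H.inner_eq_zero_of_mem_genSub hperp hw, norm_sub_sq (𝕜 := ℂ), inner_smul_right,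
    Complex.conj_mul', norm_smul, RCLike.norm_conj, hnorm, hone, eval_zero, ← Complex.ofReal_pow,
    RCLike.re_to_complex, Complex.ofReal_re]
  ring

theorem isInner_of_coeff_eq_mul_singlePointCoeff (hω : ∀ m : ℕ, H.ω m = 1 / (m + 1)) {z c : ℂ}
    (hz : ‖z‖ < 1) (hc : ‖c‖ ^ 2 * (2 - ‖z‖ ^ 2) = 1) {g : H.E}
    (hg : H.coeff g = fun k => c * singlePointCoeff z k) : H.IsInner g := by
  refine H.isInner_of_inner_pow_S_self fun j => ?_
  rw [(H.hasSum_inner_pow_S g g j).unique (((hasSum_conj_singlePointCoeff_mul hz j).mul_left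
      (conj c * c)).congr_fun fun k => by rw [hg, hω, map_mul]; push_cast; ring),
    Complex.conj_mul', Complex.conj_mul']
  split_ifs
  · exact_mod_cast hc
  · rw [mul_zero]

end WeightedHardySpace

/-- In the Bergman space `A²` (weights `ω_k = 1/(k+1)`), the single-point extremal
function is `A²`-inner and `dist²(1, [g]) = (1 - |z₁|²)²`. -/
theorem bergman_single_point (H : WeightedHardySpace)
    (hω : ∀ m : ℕ, H.ω m = 1 / (m + 1)) (z1 : ℂ) (hz1 : ‖z1‖ < 1) (hz10 : z1 ≠ 0)
    (g : H.E)
    (hg : ∀ w : ℂ, ‖w‖ < 1 →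
      H.eval g w = (((Real.sqrt (2 - ‖z1‖ ^ 2))⁻¹ : ℝ) : ℂ) *
        ((starRingEnd ℂ) z1 / (‖z1‖ : ℂ)) *
        ((z1 - w) / (1 - (starRingEnd ℂ) z1 * w)) *
        ((2 - (starRingEnd ℂ) z1 * w - ((‖z1‖ ^ 2 : ℝ) : ℂ)) / (1 - (starRingEnd ℂ) z1 * w))) :
    H.IsInner g ∧
      (Metric.infDist H.one (H.genSub g : Set H.E)) ^ 2 = (1 - ‖z1‖ ^ 2) ^ 2 := by
  set c : ℂ := (((√(2 - ‖z1‖ ^ 2))⁻¹ : ℝ) : ℂ) * (conj z1 / ‖z1‖)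
  have hs2 : 0 < 2 - ‖z1‖ ^ 2 := by nlinarith [norm_nonneg z1]
  have hc : ‖c‖ ^ 2 * (2 - ‖z1‖ ^ 2) = 1 := by
    rw [norm_mul, norm_div, Complex.norm_real, Complex.norm_real, RCLike.norm_conj, norm_norm,
      div_self (norm_ne_zero_iff.mpr hz10), mul_one, norm_inv,
      Real.norm_of_nonneg (Real.sqrt_nonneg _), inv_pow, Real.sq_sqrt hs2.le, inv_mul_cancel₀ hs2.ne']
  have hcoeff : H.coeff g = fun k => c * singlePointCoeff z1 k := by
    refine H.coeff_eq_of_hasSum_eval one_pos fun w hw => ?_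
    have hzw : ‖conj z1 * w‖ < 1 := by
      rw [norm_mul, RCLike.norm_conj]
      exact mul_lt_one_of_nonneg_of_lt_one_left (norm_nonneg _) hz1 hw.le
    rw [hg w hw, Complex.ofReal_pow, ← Complex.conj_mul', mul_assoc, div_mul_div_comm, ← sq]
    exact ((hasSum_singlePointCoeff_mul_pow z1 w hzw).mul_left c).congr_fun fun k => by ring
  have hg_inner := H.isInner_of_coeff_eq_mul_singlePointCoeff hω hz1 hc hcoeff
  refine ⟨hg_inner, ?_⟩
  rw [H.infDist_one_genSub_sq_of_isInner hg_inner, hg 0 (by simp)]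
  simp only [mul_zero, sub_zero, div_one]
  rw [show (2 : ℂ) - ((‖z1‖ ^ 2 : ℝ) : ℂ) = ((2 - ‖z1‖ ^ 2 : ℝ) : ℂ) by push_cast; ring,
    norm_mul, norm_mul, Complex.norm_real, Real.norm_of_nonneg hs2.le, mul_pow, mul_pow]
  linear_combination (-(‖z1‖ ^ 2 * (2 - ‖z1‖ ^ 2))) * hc
end
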